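/- arXiv:2203.03761 — 5 statements merged into one kernel-verified Lean document; each statement's English description precedes it below -/
import Mathlib

section
/- Let S be the sparse random projection matrix built from d, w, t with m = t·w. Then for any fixed vectors g₁, g₂ ∈ ℝ^d, the second moment of the projected inner product satisfies E[⟨S g₁, S g₂⟩²] ≤ ⟨g₁, g₂⟩² + (2/m)·‖g₁‖₂²·‖g₂‖₂². -/
open MeasureTheory Finset

/-- The sparse random projection matrix built from hash functions `h` and sign
functions `sg`: the vertical stacking of `t` count-sketch matrices, scaled by `1/√t`.
Rows are indexed by `Fin t × Fin w` (so `m = t·w` rows). -/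
noncomputable def sketchMatrix (d w t : ℕ)
    (h : Fin t → Fin d → Fin w) (sg : Fin t → Fin d → Bool) :
    Matrix (Fin t × Fin w) (Fin d) ℝ :=
  Matrix.of fun p j =>
    (Real.sqrt t)⁻¹ * (if sg p.1 j then 1 else -1) * (if h p.1 j = p.2 then 1 else 0)

/-- The (finite, uniform) sample space for the sparse random projection:
independent uniform hash functions and independent uniform signs. -/
abbrev SketchΩ (d w t : ℕ) : Type :=
  (Fin t → Fin d → Fin w) × (Fin t → Fin d → Bool)

/-- Expectation of a real-valued function under the uniform distribution on `SketchΩ`. -/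
noncomputable def sketchE (d w t : ℕ) (f : SketchΩ d w t → ℝ) : ℝ :=
  (∑ ω : SketchΩ d w t, f ω) / (Fintype.card (SketchΩ d w t) : ℝ)

/-!
Write `⟨S g₁, S g₂⟩ = (1/t) ∑ᵢ Yᵢ` with `Yᵢ = ⟨Sᵢ g₁, Sᵢ g₂⟩` the inner product of the `i`-th
count-sketch block. The blocks are i.i.d., so `E[⟨S g₁, S g₂⟩²] = (E Y)² + Var(Y) / t`.
Writing `uⱼ = (h(j), σ(j))`, one block is `Y = ∑_{j,j'} g₁ⱼ g₂ⱼ' φ(uⱼ, uⱼ')` with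
`φ(u, v) = σ σ' 1{h = h'}`: a symmetric kernel with `φ(u, u) = 1` whose average over either
argument vanishes. Hence the off-diagonal terms are orthogonal except for `{j, j'} = {k, k'}`,
which gives `E Y = ⟨g₁, g₂⟩` and `Var Y = (1/w) ∑_{j ≠ j'} x_{jj'} (x_{jj'} + x_{j'j})` for
`x_{jj'} = g₁ⱼ g₂ⱼ'`, and this is at most `(2/w) ‖g₁‖² ‖g₂‖²` by AM-GM.
-/

open Function Matrix
open scoped BigOperators

section UniformFunctions

variable {ι α : Type*} [Fintype ι] [DecidableEq ι] [Fintype α] [Nonempty α]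

theorem expect_eq_expect_update (Φ : (ι → α) → ℝ) (k : ι) :
    𝔼 f, Φ f = 𝔼 f, 𝔼 a, Φ (update f k a) := by
  let e := Equiv.funSplitAt k α
  have hupdate : ∀ f a, update f k a = e.symm (a, (e f).2) := fun f a => by
    ext j
    by_cases hj : j = k
    · subst hj
      simp [e, Equiv.funSplitAt, Equiv.piSplitAt]
    · simp [e, Equiv.funSplitAt, Equiv.piSplitAt, hj]
  simp_rw [hupdate]
  rw [Fintype.expect_equiv e Φ (fun p => Φ (e.symm p)) (by simp),
    Fintype.expect_equiv e _ (fun p => 𝔼 a, Φ (e.symm (a, p.2))) (fun f => rfl),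
    ← Finset.univ_product_univ, Finset.expect_product, Finset.expect_product]
  simp only [Fintype.expect_const]
  exact Finset.expect_comm _ _ _

theorem expect_pi_apply (F : α → ℝ) (i : ι) : 𝔼 f : ι → α, F (f i) = 𝔼 a, F a := by
  rw [expect_eq_expect_update _ i]
  simp only [update_self, Fintype.expect_const]

theorem expect_pi_apply_apply {i i' : ι} (h : i ≠ i') (Φ : α → α → ℝ) :
    𝔼 f : ι → α, Φ (f i) (f i') = 𝔼 a, 𝔼 b, Φ a b := by
  rw [expect_eq_expect_update _ i]
  simp only [update_self, update_of_ne h.symm]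
  rw [Finset.expect_comm]
  simp only [expect_pi_apply]

theorem expect_sq_expect_pi_apply [Nonempty ι] (Y : α → ℝ) :
    𝔼 f : ι → α, (𝔼 i, Y (f i)) ^ 2
      = (𝔼 a, Y a) ^ 2 + (𝔼 a, Y a ^ 2 - (𝔼 a, Y a) ^ 2) / Fintype.card ι := by
  have hpair (i i' : ι) : 𝔼 f : ι → α, Y (f i) * Y (f i')
      = (𝔼 a, Y a) ^ 2 + if i = i' then 𝔼 a, Y a ^ 2 - (𝔼 a, Y a) ^ 2 else 0 := by
    by_cases h : i = i'
    · subst h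
      simp [← sq, expect_pi_apply (fun a => Y a ^ 2)]
    · rw [if_neg h, add_zero, expect_pi_apply_apply h (fun a b => Y a * Y b), sq,
        Fintype.expect_mul_expect]
  calc 𝔼 f : ι → α, (𝔼 i, Y (f i)) ^ 2 = 𝔼 i, 𝔼 i', 𝔼 f : ι → α, Y (f i) * Y (f i') := by
        simp_rw [sq, Fintype.expect_mul_expect]
        rw [Finset.expect_comm]
        simp_rw [Finset.expect_comm (s := univ) (t := (univ : Finset (ι → α)))]
    _ = _ := by
        simp_rw [hpair, Finset.expect_add_distrib, Fintype.expect_const, Fintype.expect_ite_eq]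
        simp [NNRat.smul_def, div_eq_inv_mul]

end UniformFunctions

section DegenerateKernel

variable {J β : Type*} [Fintype J] [DecidableEq J] [Fintype β] [Nonempty β] {φ : β → β → ℝ}

theorem expect_kernel_apply_apply (hdiag : ∀ a, φ a a = 1) (hdeg : ∀ a, 𝔼 b, φ a b = 0)
    (k k' : J) : 𝔼 u : J → β, φ (u k) (u k') = if k = k' then 1 else 0 := by
  by_cases h : k = k'
  · subst h
    simp [hdiag]
  · simp [h, expect_pi_apply_apply h φ, hdeg]

theorem expect_mul_kernel_eq_zero (hsymm : ∀ a b, φ a b = φ b a) (hdeg : ∀ a, 𝔼 b, φ a b = 0)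
    (F : (J → β) → ℝ) {k k' : J} (hkk' : k ≠ k') (hF : ∀ u a, F (update u k a) = F u) :
    𝔼 u : J → β, F u * φ (u k) (u k') = 0 := by
  have hdeg' (b : β) : 𝔼 a, φ a b = 0 := by simp_rw [hsymm _ b, hdeg]
  rw [expect_eq_expect_update _ k]
  simp [hF, update_of_ne hkk'.symm, ← Finset.mul_expect, hdeg']

theorem expect_kernel_mul_kernel (hsymm : ∀ a b, φ a b = φ b a) (hdiag : ∀ a, φ a a = 1)
    (hdeg : ∀ a, 𝔼 b, φ a b = 0) {p : J × J} (hp : p.1 ≠ p.2) (q : J × J) :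
    𝔼 u : J → β, φ (u p.1) (u p.2) * φ (u q.1) (u q.2)
      = (if q = p then 𝔼 a, 𝔼 b, φ a b ^ 2 else 0)
        + (if q = p.swap then 𝔼 a, 𝔼 b, φ a b ^ 2 else 0) := by
  obtain ⟨j, j'⟩ := p
  obtain ⟨k, k'⟩ := q
  simp only [Prod.swap_prod_mk, Prod.mk.injEq] at hp ⊢
  -- a coordinate that occurs only once can be averaged out first, which kills the term
  have hzero {k k' : J} (hkk' : k ≠ k') (hj : k ≠ j) (hj' : k ≠ j') :
      𝔼 u : J → β, φ (u j) (u j') * φ (u k) (u k') = 0 :=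
    expect_mul_kernel_eq_zero hsymm hdeg _ hkk' fun u a => by
      simp only [update_of_ne hj.symm, update_of_ne hj'.symm]
  by_cases hkk' : k = k'
  · subst hkk'
    rw [if_neg fun h => hp (h.1.symm.trans h.2), if_neg fun h => hp (h.2.symm.trans h.1)]
    simp [hdiag, expect_kernel_apply_apply hdiag hdeg, hp]
  by_cases hk : k = j ∨ k = j'
  · by_cases hk' : k' = j ∨ k' = j'
    · have hsq := expect_pi_apply_apply hp fun a b => φ a b ^ 2
      rcases hk with rfl | rfl <;> rcases hk' with rfl | rfl
      · exact absurd rfl hkk'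
      · simpa [← sq, hp] using hsq
      · rw [Finset.expect_congr rfl fun u _ => by rw [hsymm (u k)]]
        simpa [← sq, hp, hp.symm] using hsq
      · exact absurd rfl hkk'
    · simp only [not_or] at hk'
      rw [Finset.expect_congr rfl fun u _ => by rw [hsymm (u k)], hzero (Ne.symm hkk') hk'.1 hk'.2]
      simp [hk'.1, hk'.2]
  · simp only [not_or] at hk
    simp [hzero hkk' hk.1 hk.2, hk.1, hk.2]

theorem expect_sq_sum_kernel (hsymm : ∀ a b, φ a b = φ b a) (hdiag : ∀ a, φ a a = 1)
    (hdeg : ∀ a, 𝔼 b, φ a b = 0) (x : J × J → ℝ) :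
    𝔼 u : J → β, (∑ p, x p * φ (u p.1) (u p.2)) ^ 2
      = (∑ j, x (j, j)) ^ 2
        + (𝔼 a, 𝔼 b, φ a b ^ 2) * ∑ p ∈ univ.offDiag, x p * (x p + x p.swap) := by
  set D := ∑ j, x (j, j)
  set R : (J → β) → ℝ := fun u => ∑ p ∈ univ.offDiag, x p * φ (u p.1) (u p.2)
  have hsplit (u : J → β) : ∑ p, x p * φ (u p.1) (u p.2) = D + R u := by
    rw [← univ_product_univ, ← diag_union_offDiag, sum_union (disjoint_diag_offDiag _), sum_diag]
    simp [D, R, hdiag]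
  have hmean : 𝔼 u, R u = 0 := by
    simp only [R, Finset.expect_sum_comm, ← Finset.mul_expect,
      expect_kernel_apply_apply hdiag hdeg]
    exact sum_eq_zero fun p hp => by simp [(mem_offDiag.1 hp).2.2]
  have hsq : 𝔼 u, R u ^ 2
      = (𝔼 a, 𝔼 b, φ a b ^ 2) * ∑ p ∈ univ.offDiag, x p * (x p + x p.swap) := by
    have hexpand (u : J → β) : R u ^ 2 = ∑ p ∈ univ.offDiag, ∑ q ∈ univ.offDiag,
        x p * x q * (φ (u p.1) (u p.2) * φ (u q.1) (u q.2)) := by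
      simp only [R, sq, sum_mul_sum, mul_mul_mul_comm]
    rw [Finset.expect_congr rfl fun u _ => hexpand u, Finset.expect_sum_comm, mul_sum]
    refine sum_congr rfl fun p hp => ?_
    rw [Finset.expect_sum_comm]
    simp_rw [← Finset.mul_expect,
      expect_kernel_mul_kernel hsymm hdiag hdeg (mem_offDiag.1 hp).2.2, mul_add, sum_add_distrib]
    simp only [mul_ite, mul_zero, sum_ite_eq', hp, ↓reduceIte, mem_offDiag, Prod.fst_swap,
      mem_univ, Prod.snd_swap, ne_eq, (mem_offDiag.1 hp).2.2.symm, not_false_eq_true, and_self]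
    ring
  calc 𝔼 u : J → β, (∑ p, x p * φ (u p.1) (u p.2)) ^ 2
      = 𝔼 u : J → β, (D ^ 2 + 2 * D * R u + R u ^ 2) :=
        Finset.expect_congr rfl fun u _ => by rw [hsplit]; ring
    _ = _ := by
        rw [Finset.expect_add_distrib, Finset.expect_add_distrib, Fintype.expect_const,
          ← Finset.mul_expect, hmean, hsq, mul_zero, add_zero]

end DegenerateKernel

theorem sum_offDiag_mul_add_swap_le {J : Type*} [Fintype J] [DecidableEq J] (x : J × J → ℝ) :
    ∑ p ∈ univ.offDiag, x p * (x p + x p.swap) ≤ 2 * ∑ p, x p ^ 2 := by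
  have hswap : ∑ p ∈ univ.offDiag, x p.swap ^ 2 = ∑ p ∈ univ.offDiag, x p ^ 2 :=
    sum_nbij' Prod.swap Prod.swap (by simp [ne_comm]) (by simp [ne_comm]) (by simp) (by simp)
      (fun _ _ => rfl)
  calc ∑ p ∈ univ.offDiag, x p * (x p + x p.swap)
      ≤ ∑ p ∈ univ.offDiag, (x p ^ 2 + (x p ^ 2 + x p.swap ^ 2) / 2) :=
        sum_le_sum fun p _ => by nlinarith [sq_nonneg (x p - x p.swap)]
    _ = 2 * ∑ p ∈ univ.offDiag, x p ^ 2 := by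
        rw [sum_add_distrib, ← sum_div, sum_add_distrib, hswap]
        ring
    _ ≤ 2 * ∑ p, x p ^ 2 := by
        have hsub := sum_le_sum_of_subset_of_nonneg (subset_univ univ.offDiag)
          fun p _ _ => sq_nonneg (x p)
        linarith

theorem mulVec_dotProduct_mulVec {m n R : Type*} [Fintype m] [Fintype n] [CommSemiring R]
    (C : Matrix m n R) (a b : n → R) :
    (C *ᵥ a) ⬝ᵥ (C *ᵥ b) = ∑ p : n × n, a p.1 * b p.2 * (Cᵀ * C) p.1 p.2 := by
  rw [← Matrix.vecMul_transpose, ← Matrix.dotProduct_mulVec, Matrix.mulVec_mulVec,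
    Fintype.sum_prod_type]
  simp only [dotProduct, Matrix.mulVec, mul_sum]
  exact sum_congr rfl fun j _ => sum_congr rfl fun j' _ => by ring

section CountSketch

variable {J W : Type*} [DecidableEq W]

/-- `φ(u, v) = σ σ' 1{h = h'}` for `u = (h, σ)`, `v = (h', σ')`, with the sign `σ ∈ Bool`
read as `±1`. -/
def signedCollision (u v : W × Bool) : ℝ :=
  if u.1 = v.1 then (if u.2 = v.2 then 1 else -1) else 0

theorem signedCollision_comm (u v : W × Bool) : signedCollision u v = signedCollision v u := by
  simp only [signedCollision, eq_comm]

@[simp]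
theorem signedCollision_self (u : W × Bool) : signedCollision u u = 1 := by
  simp [signedCollision]

/-- The count-sketch block `Sᵢ`, with the hash and sign of coordinate `j` packed as
`u j = (h j, σ j)`. -/
def countSketch (u : J → W × Bool) : Matrix W J ℝ :=
  Matrix.of fun k j => (if (u j).2 then 1 else -1) * if (u j).1 = k then 1 else 0

variable [Fintype W]

theorem expect_signedCollision (u : W × Bool) : 𝔼 v, signedCollision u v = 0 := by
  rw [← univ_product_univ, Finset.expect_product]
  refine Finset.expect_eq_zero fun k _ => ?_
  rcases u with ⟨l, b⟩
  cases b <;> simp [signedCollision, Finset.expect_eq_sum_div_card]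

theorem expect_expect_signedCollision_sq [Nonempty W] :
    𝔼 u, 𝔼 v, signedCollision (W := W) u v ^ 2 = 1 / Fintype.card W := by
  have hsq (k l : W) (b b' : Bool) :
      signedCollision (k, b) (l, b') ^ 2 = if k = l then 1 else 0 := by
    unfold signedCollision
    split_ifs <;> norm_num
  simp only [← univ_product_univ, Finset.expect_product]
  simp only [hsq, Fintype.expect_const, Fintype.expect_ite_eq]
  simp [NNRat.smul_def]

theorem countSketch_transpose_mul_self (u : J → W × Bool) :
    (countSketch u)ᵀ * countSketch u = Matrix.of fun j j' => signedCollision (u j) (u j') := by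
  ext j j'
  simp only [Matrix.mul_apply, transpose_apply, countSketch, Matrix.of_apply]
  obtain ⟨a, b⟩ := u j
  obtain ⟨a', b'⟩ := u j'
  have hdelta : ∑ k, (if a = k then (1 : ℝ) else 0) * (if a' = k then 1 else 0)
      = if a = a' then 1 else 0 := by
    rw [sum_eq_single a (fun k _ hk => by simp [Ne.symm hk]) (by simp)]
    simp [eq_comm]
  rw [sum_congr rfl fun k _ => mul_mul_mul_comm _ _ _ _, ← mul_sum]
  dsimp only
  rw [hdelta]
  cases b <;> cases b' <;> simp [signedCollision]

variable [Fintype J] [DecidableEq J] [Nonempty W]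

theorem expect_countSketch_inner (g₁ g₂ : J → ℝ) :
    𝔼 u : J → W × Bool, (countSketch u *ᵥ g₁) ⬝ᵥ (countSketch u *ᵥ g₂) = ∑ j, g₁ j * g₂ j := by
  simp only [mulVec_dotProduct_mulVec, countSketch_transpose_mul_self, Matrix.of_apply,
    Finset.expect_sum_comm, ← Finset.mul_expect,
    expect_kernel_apply_apply (signedCollision_self (W := W)) expect_signedCollision]
  simp [Fintype.sum_prod_type]

theorem expect_countSketch_inner_sq_le (g₁ g₂ : J → ℝ) :
    𝔼 u : J → W × Bool, ((countSketch u *ᵥ g₁) ⬝ᵥ (countSketch u *ᵥ g₂)) ^ 2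
      ≤ (∑ j, g₁ j * g₂ j) ^ 2
        + 2 / Fintype.card W * (∑ j, g₁ j ^ 2) * (∑ j, g₂ j ^ 2) := by
  have hmoment := expect_sq_sum_kernel (J := J) (signedCollision_comm (W := W))
    signedCollision_self expect_signedCollision (fun p : J × J => g₁ p.1 * g₂ p.2)
  have hnorms : ∑ p : J × J, (g₁ p.1 * g₂ p.2) ^ 2 = (∑ j, g₁ j ^ 2) * (∑ j, g₂ j ^ 2) := by
    simp only [mul_pow, sum_mul_sum, Fintype.sum_prod_type]
  have hbound := sum_offDiag_mul_add_swap_le (fun p : J × J => g₁ p.1 * g₂ p.2)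
  rw [expect_expect_signedCollision_sq] at hmoment
  simp only [Prod.fst_swap, Prod.snd_swap, hnorms] at hmoment hbound
  have hscaled := mul_le_mul_of_nonneg_left hbound (by positivity : (0 : ℝ) ≤ 1 / Fintype.card W)
  simp only [mulVec_dotProduct_mulVec, countSketch_transpose_mul_self, Matrix.of_apply]
  rw [hmoment]
  linarith [show 1 / (Fintype.card W : ℝ) * (2 * ((∑ j, g₁ j ^ 2) * ∑ j, g₂ j ^ 2))
    = 2 / Fintype.card W * (∑ j, g₁ j ^ 2) * ∑ j, g₂ j ^ 2 by ring]

end CountSketch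

theorem sketchMatrix_mulVec_apply {d w t : ℕ} (h : Fin t → Fin d → Fin w)
    (sg : Fin t → Fin d → Bool) (g : Fin d → ℝ) (i : Fin t) (k : Fin w) :
    (sketchMatrix d w t h sg *ᵥ g) (i, k)
      = (Real.sqrt t)⁻¹ * (countSketch (fun j => (h i j, sg i j)) *ᵥ g) k := by
  simp only [Matrix.mulVec, dotProduct, sketchMatrix, countSketch, Matrix.of_apply, mul_sum]
  exact sum_congr rfl fun j _ => by ring

theorem sketchMatrix_inner_eq_expect {d w t : ℕ} (h : Fin t → Fin d → Fin w)
    (sg : Fin t → Fin d → Bool) (g₁ g₂ : Fin d → ℝ) :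
    ∑ p : Fin t × Fin w, (sketchMatrix d w t h sg *ᵥ g₁) p * (sketchMatrix d w t h sg *ᵥ g₂) p
      = 𝔼 i, (countSketch (fun j => (h i j, sg i j)) *ᵥ g₁)
          ⬝ᵥ (countSketch (fun j => (h i j, sg i j)) *ᵥ g₂) := by
  have hscale : (Real.sqrt t)⁻¹ * (Real.sqrt t)⁻¹ = (t : ℝ)⁻¹ := by
    rw [← mul_inv, Real.mul_self_sqrt (Nat.cast_nonneg t)]
  simp only [Fintype.sum_prod_type, sketchMatrix_mulVec_apply, Fintype.expect_eq_sum_div_card,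
    Fintype.card_fin, dotProduct, div_eq_inv_mul, mul_sum]
  refine sum_congr rfl fun i _ => sum_congr rfl fun k _ => ?_
  rw [← hscale]
  ring

theorem sketch_inner_second_moment_general (d w t : ℕ) (hw : 0 < w) (ht : 0 < t)
    (g₁ g₂ : Fin d → ℝ) :
    sketchE d w t (fun ω =>
        (∑ p : Fin t × Fin w,
          (sketchMatrix d w t ω.1 ω.2).mulVec g₁ p *
            (sketchMatrix d w t ω.1 ω.2).mulVec g₂ p) ^ 2)
      ≤ (∑ j : Fin d, g₁ j * g₂ j) ^ 2
        + (2 / ((t : ℝ) * w)) * (∑ j : Fin d, (g₁ j) ^ 2) * (∑ j : Fin d, (g₂ j) ^ 2) := by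
  have : Nonempty (Fin w) := ⟨⟨0, hw⟩⟩
  have : Nonempty (Fin t) := ⟨⟨0, ht⟩⟩
  let blocks : SketchΩ d w t ≃ (Fin t → Fin d → Fin w × Bool) :=
    (Equiv.arrowProdEquivProdArrow _ _ _).symm.trans
      (Equiv.piCongrRight fun _ => (Equiv.arrowProdEquivProdArrow _ _ _).symm)
  have hblock := expect_countSketch_inner_sq_le (W := Fin w) g₁ g₂
  rw [sketchE, ← Fintype.expect_eq_sum_div_card,
    Fintype.expect_equiv blocks _
      (fun U => (𝔼 i, (countSketch (U i) *ᵥ g₁) ⬝ᵥ (countSketch (U i) *ᵥ g₂)) ^ 2)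
      (fun ω => by rw [sketchMatrix_inner_eq_expect]; rfl),
    expect_sq_expect_pi_apply
      (fun u : Fin d → Fin w × Bool => (countSketch u *ᵥ g₁) ⬝ᵥ (countSketch u *ᵥ g₂)),
    expect_countSketch_inner, Fintype.card_fin]
  rw [Fintype.card_fin] at hblock
  have htR : (0 : ℝ) < t := by exact_mod_cast ht
  calc _ ≤ (∑ j, g₁ j * g₂ j) ^ 2
        + 2 / w * (∑ j, g₁ j ^ 2) * (∑ j, g₂ j ^ 2) / t := by gcongr; linarith
    _ = _ := by field_simp

/-- second moment of the projected inner product: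
`E[⟨S g₁, S g₂⟩²] ≤ ⟨g₁, g₂⟩² + (2/m)·‖g₁‖₂²·‖g₂‖₂²` with `m = t·w`. -/
theorem sketch_inner_second_moment (d w t : ℕ) (hd : 0 < d) (hw : 0 < w) (ht : 0 < t)
    (g₁ g₂ : Fin d → ℝ) :
    sketchE d w t (fun ω =>
        (∑ p : Fin t × Fin w,
          (sketchMatrix d w t ω.1 ω.2).mulVec g₁ p *
            (sketchMatrix d w t ω.1 ω.2).mulVec g₂ p) ^ 2)
      ≤ (∑ j : Fin d, g₁ j * g₂ j) ^ 2
        + (2 / ((t : ℝ) * w)) * (∑ j : Fin d, (g₁ j) ^ 2) * (∑ j : Fin d, (g₂ j) ^ 2) :=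
  sketch_inner_second_moment_general d w t hw ht g₁ g₂
end

section
/- Let S be the sparse random projection matrix built from d, w, t with m = t·w. Then for any fixed vector g ∈ ℝ^d, the reconstruction error of the project-then-unproject map satisfies E[‖Sᵀ S g − g‖₂²] ≤ (2d/m)·‖g‖₂². -/
open MeasureTheory Finset

/-!
Since `SᵀS = t⁻¹ ∑ᵢ SᵢᵀSᵢ` has unit diagonal, the `j`-th coordinate of `SᵀSg - g` is
`t⁻¹ ∑_{i, k ≠ j} σᵢ(j) σᵢ(k) 1{hᵢ(j) = hᵢ(k)} g_k`. Distinct terms of this sum are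
orthogonal: flipping a sign that one of them sees and the other does not negates their
product. Each term has second moment `g_k² / w`, the collision probability of two independent
hash values. Summing, `E ‖SᵀSg - g‖² = (d - 1)/(t w) · ‖g‖²`.
-/

open scoped BigOperators Matrix

section Expectation

variable {Ω : Type*} [Fintype Ω]

theorem Function.Involutive.expect_eq_zero {K : Type*} [Field K] [CharZero K] {φ : Ω → Ω}
    (hφ : Function.Involutive φ) {F : Ω → K} (hF : ∀ x, F (φ x) = -F x) : 𝔼 x, F x = 0 := by
  have h : 𝔼 x, F x = -𝔼 x, F x := by
    rw [← expect_neg_distrib]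
    exact Fintype.expect_equiv (hφ.toPerm φ) _ _ fun x => by simp [hF]
  exact self_eq_neg.mp h

theorem expect_sq_sum_of_pairwise_orthogonal {R ι : Type*} [Semiring R] [Module ℚ≥0 R]
    {s : Finset ι} {X : ι → Ω → R}
    (h : (s : Set ι).Pairwise fun p q => 𝔼 x, X p x * X q x = 0) :
    𝔼 x, (∑ p ∈ s, X p x) ^ 2 = ∑ p ∈ s, 𝔼 x, X p x ^ 2 := by
  simp_rw [sq, sum_mul_sum, expect_sum_comm]
  refine sum_congr rfl fun p hp => ?_
  rw [sum_eq_single_of_mem p hp fun q hq hqp => h hp hq (Ne.symm hqp)]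

theorem expect_prod_fst {Ω' M : Type*} [Fintype Ω'] [Nonempty Ω'] [AddCommMonoid M]
    [Module ℚ≥0 M] (F : Ω → M) :
    𝔼 x : Ω × Ω', F x.1 = 𝔼 x, F x := by
  rw [← univ_product_univ, expect_product' univ univ fun a _ => F a]
  simp

end Expectation

section RandomFunctions

variable {α β : Type*} [Fintype α] [DecidableEq α] [Fintype β] [DecidableEq β]

theorem expect_ite_apply_eq_apply {K : Type*} [Semifield K] [CharZero K] {a b : α}
    (hab : a ≠ b) :
    𝔼 f : α → β, (if f a = f b then 1 else 0 : K) = (Fintype.card β : K)⁻¹ := by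
  rcases isEmpty_or_nonempty β with hβ | hβ
  · have : IsEmpty (α → β) := ⟨fun f => hβ.false (f a)⟩
    simp
  rw [Fintype.expect_equiv (Equiv.funSplitAt a β) _
    (fun x => if x.1 = x.2 ⟨b, hab.symm⟩ then (1 : K) else 0)
    (fun f => by simp [Equiv.funSplitAt])]
  rw [← univ_product_univ, expect_product univ univ, expect_comm]
  simp

end RandomFunctions

section Signs

variable {α : Type*} [DecidableEq α]

def boolSign (b : Bool) : ℝ := if b then 1 else -1

@[simp] theorem boolSign_sq (b : Bool) : boolSign b ^ 2 = 1 := by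
  cases b <;> norm_num [boolSign]

theorem boolSign_update_not (σ : α → Bool) (a x : α) :
    boolSign (Function.update σ a (!σ a) x) =
      if x = a then -boolSign (σ x) else boolSign (σ x) := by
  rcases eq_or_ne x a with rfl | hx
  · cases σ x <;> simp [boolSign]
  · simp [hx]

theorem involutive_update_not (a : α) :
    Function.Involutive fun σ : α → Bool => Function.update σ a (!σ a) := by
  intro σ
  simp

end Signs

section Sketch

variable {d w t : ℕ}

abbrev UncurriedSketchΩ (d w t : ℕ) : Type :=
  (Fin t × Fin d → Fin w) × (Fin t × Fin d → Bool)

theorem sketchE_eq_expect_uncurry (f : SketchΩ d w t → ℝ) :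
    sketchE d w t f = 𝔼 ω : UncurriedSketchΩ d w t,
      f (Function.curry ω.1, Function.curry ω.2) := by
  rw [sketchE, ← Fintype.expect_eq_sum_div_card]
  exact (Fintype.expect_equiv ((Equiv.curry _ _ _).prodCongr (Equiv.curry _ _ _)).symm _ _
    fun _ => rfl)

theorem transpose_mul_sketchMatrix_apply (h : Fin t → Fin d → Fin w) (sg : Fin t → Fin d → Bool)
    (j k : Fin d) :
    ((sketchMatrix d w t h sg)ᵀ * sketchMatrix d w t h sg) j k =
      (t : ℝ)⁻¹ * ∑ i, boolSign (sg i j) * boolSign (sg i k) * if h i j = h i k then 1 else 0 := by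
  have hsqrt : (Real.sqrt t)⁻¹ * (Real.sqrt t)⁻¹ = (t : ℝ)⁻¹ := by
    rw [← mul_inv, Real.mul_self_sqrt t.cast_nonneg]
  simp only [Matrix.mul_apply, Matrix.transpose_apply, sketchMatrix, Matrix.of_apply,
    Fintype.sum_prod_type, mul_sum]
  refine sum_congr rfl fun i _ => ?_
  rw [Fintype.sum_eq_single (h i j) fun x hx => by simp [Ne.symm hx], ← hsqrt, boolSign,
    boolSign]
  simp only [if_true, eq_comm (a := h i k)]
  ring

theorem transpose_mul_sketchMatrix_apply_self (ht : 0 < t) (h : Fin t → Fin d → Fin w)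
    (sg : Fin t → Fin d → Bool) (j : Fin d) :
    ((sketchMatrix d w t h sg)ᵀ * sketchMatrix d w t h sg) j j = 1 := by
  simp [transpose_mul_sketchMatrix_apply, ← sq, ht.ne']

def collisionTerm (g : Fin d → ℝ) (j : Fin d) (p : Fin t × Fin d)
    (ω : UncurriedSketchΩ d w t) : ℝ :=
  boolSign (ω.2 (p.1, j)) * boolSign (ω.2 p) * (if ω.1 (p.1, j) = ω.1 p then 1 else 0) * g p.2

theorem sketchMatrix_transpose_mulVec_mulVec_sub (ht : 0 < t) (g : Fin d → ℝ) (j : Fin d)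
    (ω : UncurriedSketchΩ d w t) :
    (sketchMatrix d w t (Function.curry ω.1) (Function.curry ω.2)).transpose.mulVec
        ((sketchMatrix d w t (Function.curry ω.1) (Function.curry ω.2)).mulVec g) j - g j =
      (t : ℝ)⁻¹ * ∑ p ∈ univ ×ˢ univ.erase j, collisionTerm g j p ω := by
  rw [Matrix.mulVec_mulVec, Matrix.mulVec, dotProduct, ← add_sum_erase _ _ (mem_univ j),
    transpose_mul_sketchMatrix_apply_self ht, one_mul, add_sub_cancel_left, sum_product_right,
    mul_sum]
  refine sum_congr rfl fun k _ => ?_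
  rw [transpose_mul_sketchMatrix_apply, mul_assoc, sum_mul]
  rfl

theorem collisionTerm_update_not (g : Fin d → ℝ) (j : Fin d) (p a : Fin t × Fin d)
    (ω : UncurriedSketchΩ d w t) :
    collisionTerm g j p (ω.1, Function.update ω.2 a (!ω.2 a)) =
      (if (p.1, j) = a then -1 else 1) * (if p = a then -1 else 1) * collisionTerm g j p ω := by
  simp only [collisionTerm, boolSign_update_not]
  split_ifs <;> ring

theorem expect_collisionTerm_mul_eq_zero (g : Fin d → ℝ) (j : Fin d) {p q : Fin t × Fin d}
    (hp : p.2 ≠ j) (hpq : p ≠ q) :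
    𝔼 ω : UncurriedSketchΩ d w t, collisionTerm g j p ω * collisionTerm g j q ω = 0 := by
  -- flip the sign at a point that `p` sees exactly once and `q` does not see
  suffices ∃ a : Fin t × Fin d, ((p.1, j) = a ↔ p ≠ a) ∧ (q.1, j) ≠ a ∧ q ≠ a by
    obtain ⟨a, hpa, hqj, hqa⟩ := this
    refine Function.Involutive.expect_eq_zero
      (φ := fun ω => (ω.1, Function.update ω.2 a (!ω.2 a)))
      (fun ω => Prod.ext rfl (involutive_update_not a ω.2)) fun ω => ?_
    have hsign : (if (p.1, j) = a then (-1 : ℝ) else 1) * (if p = a then -1 else 1) = -1 := by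
      split_ifs <;> simp_all
    rw [collisionTerm_update_not, collisionTerm_update_not, hsign, if_neg hqj, if_neg hqa]
    ring
  by_cases h1 : p.1 = q.1
  · exact ⟨p, by simp [Prod.ext_iff, Ne.symm hp], fun h => hp (congrArg Prod.snd h).symm,
      Ne.symm hpq⟩
  · exact ⟨(p.1, j), by simp [Prod.ext_iff, hp], fun h => h1 (congrArg Prod.fst h).symm,
      fun h => h1 (congrArg Prod.fst h).symm⟩

theorem expect_collisionTerm_sq (g : Fin d → ℝ) (j : Fin d) {p : Fin t × Fin d} (hp : p.2 ≠ j) :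
    𝔼 ω : UncurriedSketchΩ d w t, collisionTerm g j p ω ^ 2 = (w : ℝ)⁻¹ * g p.2 ^ 2 := by
  have hsq : ∀ ω : UncurriedSketchΩ d w t, collisionTerm g j p ω ^ 2 =
      (if ω.1 (p.1, j) = ω.1 p then 1 else 0) * g p.2 ^ 2 := fun ω => by
    simp only [collisionTerm]
    split_ifs <;> simp [mul_pow]
  have hne : (p.1, j) ≠ p := fun h => hp (congrArg Prod.snd h).symm
  simp_rw [hsq]
  rw [← expect_mul, expect_prod_fst fun h : Fin t × Fin d → Fin w =>
    if h (p.1, j) = h p then (1 : ℝ) else 0, expect_ite_apply_eq_apply hne, Fintype.card_fin]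

theorem expect_sq_sum_collisionTerm (g : Fin d → ℝ) (j : Fin d) :
    𝔼 ω : UncurriedSketchΩ d w t, (∑ p ∈ univ ×ˢ univ.erase j, collisionTerm g j p ω) ^ 2 =
      t * ((w : ℝ)⁻¹ * ∑ k ∈ univ.erase j, g k ^ 2) := by
  have hmem : ∀ p ∈ (univ : Finset (Fin t)) ×ˢ univ.erase j, p.2 ≠ j := fun p hp =>
    ne_of_mem_erase (mem_product.mp hp).2
  rw [expect_sq_sum_of_pairwise_orthogonal fun p hp q _ hpq =>
      expect_collisionTerm_mul_eq_zero g j (hmem p hp) hpq,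
    sum_congr rfl fun p hp => expect_collisionTerm_sq g j (hmem p hp), sum_product]
  simp [← mul_sum]

theorem sketchE_reconstruction_error_eq (ht : 0 < t) (g : Fin d → ℝ) :
    sketchE d w t (fun ω => ∑ j : Fin d,
        ((sketchMatrix d w t ω.1 ω.2).transpose.mulVec
          ((sketchMatrix d w t ω.1 ω.2).mulVec g) j - g j) ^ 2) =
      ((d : ℝ) - 1) / (t * w) * ∑ j : Fin d, g j ^ 2 := by
  rw [sketchE_eq_expect_uncurry]
  simp_rw [sketchMatrix_transpose_mulVec_mulVec_sub ht, mul_pow]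
  rw [expect_sum_comm]
  simp_rw [← mul_expect, expect_sq_sum_collisionTerm, sum_erase_eq_sub (mem_univ _)]
  simp only [← mul_sum, sum_sub_distrib, sum_const, card_univ, Fintype.card_fin, nsmul_eq_mul]
  field_simp

end Sketch

theorem sketch_reconstruction_error_general (d w t : ℕ) (ht : 0 < t)
    (g : Fin d → ℝ) :
    sketchE d w t (fun ω =>
        ∑ j : Fin d,
          ((sketchMatrix d w t ω.1 ω.2).transpose.mulVec
              ((sketchMatrix d w t ω.1 ω.2).mulVec g) j - g j) ^ 2)
      ≤ (2 * (d : ℝ) / ((t : ℝ) * w)) * ∑ j : Fin d, (g j) ^ 2 := by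
  rw [sketchE_reconstruction_error_eq ht]
  gcongr
  linarith [d.cast_nonneg (α := ℝ)]

/-- reconstruction error of project-then-unproject:
`E[‖Sᵀ S g − g‖₂²] ≤ (2d/m)·‖g‖₂²` with `m = t·w`. -/
theorem sketch_reconstruction_error (d w t : ℕ) (hd : 0 < d) (hw : 0 < w) (ht : 0 < t)
    (g : Fin d → ℝ) :
    sketchE d w t (fun ω =>
        ∑ j : Fin d,
          ((sketchMatrix d w t ω.1 ω.2).transpose.mulVec
              ((sketchMatrix d w t ω.1 ω.2).mulVec g) j - g j) ^ 2)
      ≤ (2 * (d : ℝ) / ((t : ℝ) * w)) * ∑ j : Fin d, (g j) ^ 2 :=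
  sketch_reconstruction_error_general d w t ht g
end

section
/- Let d and b be positive integers and c > 0. For every b-bit randomized compression scheme (C, v̂) for the ball B_d(c), the worst-case mean squared error satisfies sup over v ∈ B_d(c) of MSE(v) ≥ c²·2^(−2b/d). -/
open MeasureTheory Finset

/-- A `b`-bit randomized compression scheme for the Euclidean ball of radius `c`
in `ℝ^d`: a Markov-kernel encoder `enc` into the message set `Fin (2^b)` and a
Markov-kernel decoder `dec` producing probability distributions on `ℝ^d` with
finite second moment; encoder and decoder randomness are independent. -/
structure CompressionScheme (d b : ℕ) (c : ℝ) where
  enc : (Fin d → ℝ) → Fin (2 ^ b) → ℝ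
  dec : Fin (2 ^ b) → Measure (Fin d → ℝ)
  enc_nonneg : ∀ v k, 0 ≤ enc v k
  enc_sum_one : ∀ v : Fin d → ℝ, Real.sqrt (∑ j, (v j) ^ 2) ≤ c → ∑ k, enc v k = 1
  dec_prob : ∀ k, IsProbabilityMeasure (dec k)
  dec_sq_integrable : ∀ k, Integrable (fun u : Fin d → ℝ => ∑ j, (u j) ^ 2) (dec k)

noncomputable def MSE {d b : ℕ} {c : ℝ} (A : CompressionScheme d b c)
    (v : Fin d → ℝ) : ℝ :=
  ∑ k, A.enc v k * ∫ u, (∑ j, (u j - v j) ^ 2) ∂(A.dec k)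

open Metric Module

/-!
Replacing each decoder distribution by its mean can only decrease the squared error
(bias–variance), and an average of errors over messages dominates the smallest one. So a
scheme whose worst-case MSE is at most `C` yields `2^b` points whose closed `√C`-balls cover
`B_d(c)`. Comparing volumes, `c^d ≤ 2^b (√C)^d`, i.e. `C ≥ c² 2^(-2b/d)`.
-/

lemma sq_integral_le_integral_sq {Ω : Type*} [MeasurableSpace Ω] {μ : Measure Ω}
    [IsProbabilityMeasure μ] {f : Ω → ℝ} (hf : MemLp f 2 μ) :
    (∫ ω, f ω ∂μ) ^ 2 ≤ ∫ ω, f ω ^ 2 ∂μ := by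
  have h := ProbabilityTheory.variance_nonneg f μ
  rw [ProbabilityTheory.variance_eq_sub hf, sub_nonneg] at h
  simpa only [Pi.pow_apply] using h

lemma memLp_two_apply_of_integrable_sum_sq {ι : Type*} [Fintype ι] {μ : Measure (ι → ℝ)}
    (h : Integrable (fun u : ι → ℝ => ∑ j, u j ^ 2) μ) (j : ι) :
    MemLp (fun u : ι → ℝ => u j) 2 μ := by
  rw [memLp_two_iff_integrable_sq (measurable_pi_apply j).aestronglyMeasurable]
  refine h.mono ((measurable_pi_apply j).pow_const 2).aestronglyMeasurable
    (Filter.Eventually.of_forall fun u => ?_)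
  rw [Real.norm_of_nonneg (sq_nonneg _), Real.norm_of_nonneg (sum_nonneg fun i _ => sq_nonneg _)]
  exact single_le_sum (f := fun i => u i ^ 2) (fun i _ => sq_nonneg _) (mem_univ j)

lemma sum_sq_integral_sub_le_integral_sum_sq {ι : Type*} [Fintype ι] {μ : Measure (ι → ℝ)}
    [IsProbabilityMeasure μ] (h : Integrable (fun u : ι → ℝ => ∑ j, u j ^ 2) μ) (v : ι → ℝ) :
    ∑ j, (∫ u, u j ∂μ - v j) ^ 2 ≤ ∫ u, ∑ j, (u j - v j) ^ 2 ∂μ := by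
  have hcoord := memLp_two_apply_of_integrable_sum_sq h
  have hshift : ∀ j, MemLp (fun u : ι → ℝ => u j - v j) 2 μ :=
    fun j => (hcoord j).sub (memLp_const _)
  rw [integral_finsetSum _ fun j _ => (hshift j).integrable_sq]
  refine sum_le_sum fun j _ => ?_
  have hmean : ∫ u, u j ∂μ - v j = ∫ u, (u j - v j) ∂μ := by
    rw [integral_sub ((hcoord j).integrable one_le_two) (integrable_const _), integral_const,
      probReal_univ, one_smul]
  rw [hmean]
  exact sq_integral_le_integral_sq (hshift j)

lemma exists_le_sum_mul_of_sum_eq_one {ι : Type*} [Fintype ι] {w f : ι → ℝ}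
    (hw₀ : ∀ i, 0 ≤ w i) (hw₁ : ∑ i, w i = 1) : ∃ i, f i ≤ ∑ i, w i * f i := by
  have hne : (univ : Finset ι).Nonempty := nonempty_of_sum_ne_zero (hw₁ ▸ one_ne_zero)
  have h := inf_le_centerMass (s := univ) (f := f) (fun i _ => hw₀ i) (hw₁ ▸ one_pos)
  obtain ⟨i, -, hi⟩ := exists_mem_eq_inf' hne f
  rw [hi, centerMass, hw₁, inv_one, one_smul] at h
  exact ⟨i, h⟩

theorem pow_finrank_le_card_mul_pow_of_closedBall_subset_iUnion {E ι : Type*}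
    [NormedAddCommGroup E] [NormedSpace ℝ E] [FiniteDimensional ℝ E] [Fintype ι] {x : ι → E}
    {c r : ℝ} (hc : 0 ≤ c) (hr : 0 ≤ r) (hcover : closedBall 0 c ⊆ ⋃ i, closedBall (x i) r) :
    c ^ finrank ℝ E ≤ Fintype.card ι * r ^ finrank ℝ E := by
  borelize E
  set μ : Measure E := Measure.addHaar
  have hvol : μ (closedBall 0 c) ≤ ∑ i, μ (closedBall (x i) r) :=
    (measure_mono hcover).trans (measure_iUnion_fintype_le μ _)
  simp only [Measure.addHaar_closedBall' μ _ hc, Measure.addHaar_closedBall' μ _ hr, sum_const,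
    card_univ, nsmul_eq_mul, ← mul_assoc] at hvol
  rw [ENNReal.mul_le_mul_iff_left (measure_closedBall_pos μ 0 one_pos).ne'
    measure_closedBall_lt_top.ne, ← ENNReal.ofReal_natCast, ← ENNReal.ofReal_mul (by positivity),
    ENNReal.ofReal_le_ofReal_iff (by positivity)] at hvol
  exact hvol

lemma mul_rpow_neg_inv_le_of_pow_le_mul_pow {c s N : ℝ} {d : ℕ} (hc : 0 ≤ c) (hs : 0 ≤ s)
    (hN : 0 < N) (hd : d ≠ 0) (h : c ^ d ≤ N * s ^ d) : c * N ^ (-(d : ℝ)⁻¹) ≤ s := by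
  rw [← pow_le_pow_iff_left₀ (by positivity) hs hd, mul_pow, Real.rpow_neg hN.le, inv_pow,
    Real.rpow_inv_natCast_pow hN.le hd, ← div_eq_mul_inv, div_le_iff₀ hN, mul_comm]
  exact h

namespace CompressionScheme

variable {d b : ℕ} {c : ℝ} (A : CompressionScheme d b c)

noncomputable def decMean (k : Fin (2 ^ b)) : EuclideanSpace ℝ (Fin d) :=
  WithLp.toLp 2 fun j => ∫ u, u j ∂A.dec k

lemma MSE_nonneg (v : Fin d → ℝ) : 0 ≤ MSE A v :=
  sum_nonneg fun k _ => mul_nonneg (A.enc_nonneg v k)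
    (integral_nonneg fun _ => sum_nonneg fun _ _ => sq_nonneg _)

lemma exists_sum_sq_sub_decMean_le_MSE {v : Fin d → ℝ} (hv : √(∑ j, v j ^ 2) ≤ c) :
    ∃ k, ∑ j, (v j - A.decMean k j) ^ 2 ≤ MSE A v := by
  obtain ⟨k, hk⟩ := exists_le_sum_mul_of_sum_eq_one (f := fun k => ∑ j, (v j - A.decMean k j) ^ 2)
    (A.enc_nonneg v) (A.enc_sum_one v hv)
  refine ⟨k, hk.trans (sum_le_sum fun k _ => mul_le_mul_of_nonneg_left ?_ (A.enc_nonneg v k))⟩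
  have := A.dec_prob k
  simpa only [decMean, PiLp.toLp_apply, ← neg_sub (v _), neg_sq] using
    sum_sq_integral_sub_le_integral_sum_sq (A.dec_sq_integrable k) v

lemma closedBall_subset_iUnion_closedBall_decMean {C : ℝ}
    (hC : ∀ v : Fin d → ℝ, √(∑ j, v j ^ 2) ≤ c → MSE A v ≤ C) :
    closedBall (0 : EuclideanSpace ℝ (Fin d)) c ⊆ ⋃ k, closedBall (A.decMean k) √C := by
  intro v hv
  have hv' : √(∑ j, v j ^ 2) ≤ c := by
    rw [mem_closedBall_zero_iff, EuclideanSpace.norm_eq] at hv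
    simpa only [Real.norm_eq_abs, sq_abs] using hv
  obtain ⟨k, hk⟩ := A.exists_sum_sq_sub_decMean_le_MSE hv'
  refine Set.mem_iUnion.2 ⟨k, ?_⟩
  rw [mem_closedBall, EuclideanSpace.dist_eq]
  exact Real.sqrt_le_sqrt (by simpa [Real.dist_eq, sq_abs] using hk.trans (hC v hv'))

end CompressionScheme

theorem compression_mse_lower_bound_general (d b : ℕ) (hd : 0 < d)
    (c : ℝ) (hc : 0 < c) (A : CompressionScheme d b c) (Cbd : ℝ)
    (hCbd : ∀ v : Fin d → ℝ, Real.sqrt (∑ j, (v j) ^ 2) ≤ c → MSE A v ≤ Cbd) :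
    c ^ 2 * (2 : ℝ) ^ (-(2 * (b : ℝ)) / (d : ℝ)) ≤ Cbd := by
  have hCbd₀ : 0 ≤ Cbd := (A.MSE_nonneg 0).trans (hCbd 0 (by simpa using hc.le))
  have hvol := pow_finrank_le_card_mul_pow_of_closedBall_subset_iUnion hc.le
    (Real.sqrt_nonneg Cbd) (A.closedBall_subset_iUnion_closedBall_decMean hCbd)
  rw [finrank_euclideanSpace_fin, Fintype.card_fin, Nat.cast_pow, Nat.cast_ofNat] at hvol
  have hroot := mul_rpow_neg_inv_le_of_pow_le_mul_pow hc.le (Real.sqrt_nonneg _) (by positivity)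
    hd.ne' hvol
  have hexp : (((2 : ℝ) ^ b) ^ (-(d : ℝ)⁻¹)) ^ 2 = 2 ^ (-(2 * (b : ℝ)) / d) := by
    rw [← Real.rpow_natCast 2 b, ← Real.rpow_mul zero_le_two, ← Real.rpow_natCast _ 2,
      ← Real.rpow_mul (by positivity)]
    congr 1
    ring
  calc c ^ 2 * 2 ^ (-(2 * (b : ℝ)) / d) = (c * ((2 : ℝ) ^ b) ^ (-(d : ℝ)⁻¹)) ^ 2 := by
        rw [mul_pow, hexp]
    _ ≤ √Cbd ^ 2 := pow_le_pow_left₀ (by positivity) hroot 2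
    _ = Cbd := Real.sq_sqrt hCbd₀

/-- for every `b`-bit randomized compression scheme for `B_d(c)`,
the worst-case MSE is at least `c²·2^(−2b/d)` (stated as: any uniform upper bound
`Cbd` on the MSE over the ball satisfies `Cbd ≥ c²·2^(−2b/d)`). -/
theorem compression_mse_lower_bound (d b : ℕ) (hd : 0 < d) (hb : 0 < b)
    (c : ℝ) (hc : 0 < c) (A : CompressionScheme d b c) (Cbd : ℝ)
    (hCbd : ∀ v : Fin d → ℝ, Real.sqrt (∑ j, (v j) ^ 2) ≤ c → MSE A v ≤ Cbd) :
    c ^ 2 * (2 : ℝ) ^ (-(2 * (b : ℝ)) / (d : ℝ)) ≤ Cbd :=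
  compression_mse_lower_bound_general d b hd c hc A Cbd hCbd
end

section
/- There exists a universal constant C > 0 with the following property (expected maximum load of balls in bins). Let d and w be positive integers with d ≥ w·log(w+1), let X₁, …, X_d be independent random variables each uniformly distributed on {1,…,w}, and for each k ∈ {1,…,w} let N_k = #{ i : X_i = k }. Then E[ max over k of N_k ] ≤ C·d/w. -/
/-!
Put `t = ⌈8 d / w⌉`. The maximum load is at most `t` unless some bin receives `t` balls, and it is
always at most `d`. A union bound over the `w` bins and the `t`-subsets of balls shows that the
exceptional assignments have probability at most `w · C(d,t) · w⁻ᵗ ≤ w · (e d / (t w))ᵗ ≤ w e⁻ᵗ`,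
and `t ≥ 8 log (w + 1)` makes this at most `1 / w²`. Hence `E[max_k N_k] ≤ t + d / w ≤ 11 d / w`,
where `d / w ≥ log 2 > 1 / 2` absorbs the rounding in `t`.
-/

open Finset Real

lemma Finset.sum_le_mul_card_add_mul_card_filter_le {α : Type*} (s : Finset α) (g : α → ℕ)
    {B : ℕ} (hg : ∀ x ∈ s, g x ≤ B) (t : ℕ) :
    ∑ x ∈ s, g x ≤ t * #s + B * #{x ∈ s | t ≤ g x} :=
  calc ∑ x ∈ s, g x ≤ ∑ x ∈ s, (t + B * if t ≤ g x then 1 else 0) :=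
        sum_le_sum fun x hx => by split_ifs <;> linarith [hg x hx]
    _ = t * #s + B * #{x ∈ s | t ≤ g x} := by
        rw [sum_add_distrib, ← mul_sum, sum_boole, sum_const, smul_eq_mul, mul_comm, Nat.cast_id]

lemma Nat.choose_le_exp_one_mul_div_pow (n k : ℕ) :
    (n.choose k : ℝ) ≤ (exp 1 * n / k) ^ k := by
  have hk : (k : ℝ) ^ k / k.factorial ≤ exp 1 ^ k := by
    rw [← exp_nat_mul, mul_one]; exact pow_div_factorial_le_exp (k : ℝ) k.cast_nonneg k
  calc (n.choose k : ℝ) ≤ n ^ k / k.factorial := choose_le_pow_div k n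
    _ = (n / k) ^ k * ((k : ℝ) ^ k / k.factorial) := by
        rcases k.eq_zero_or_pos with rfl | hk0
        · simp
        · rw [div_pow]; field_simp
    _ ≤ (n / k) ^ k * exp 1 ^ k := by gcongr
    _ = (exp 1 * n / k) ^ k := by rw [← mul_pow]; ring

lemma choose_mul_pow_sub_le_pow_mul_exp_neg {n m t : ℕ} (hm : 0 < m) (ht : 0 < t)
    (h : exp 2 * n ≤ t * m) :
    (n.choose t : ℝ) * (m : ℝ) ^ (n - t) ≤ (m : ℝ) ^ n * exp (-t) := by
  rcases lt_or_ge n t with hnt | htn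
  · rw [Nat.choose_eq_zero_of_lt hnt, Nat.cast_zero, zero_mul]; positivity
  have hbase : exp 1 * n / (t * m) ≤ exp (-1) := by
    rw [div_le_iff₀ (by positivity), exp_neg, ← div_eq_inv_mul, le_div_iff₀ (exp_pos 1)]
    calc exp 1 * n * exp 1 = exp 2 * n := by rw [mul_right_comm, ← exp_add]; norm_num
      _ ≤ t * m := h
  have hpow : (m : ℝ) ^ n = (m : ℝ) ^ (n - t) * (m : ℝ) ^ t := by
    rw [← pow_add, Nat.sub_add_cancel htn]
  calc (n.choose t : ℝ) * (m : ℝ) ^ (n - t)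
      = (m : ℝ) ^ n * ((n.choose t : ℝ) / (m : ℝ) ^ t) := by rw [hpow]; field_simp
    _ ≤ (m : ℝ) ^ n * ((exp 1 * n / t) ^ t / (m : ℝ) ^ t) := by
        gcongr; exact Nat.choose_le_exp_one_mul_div_pow n t
    _ = (m : ℝ) ^ n * (exp 1 * n / (t * m)) ^ t := by rw [← div_pow, div_div]
    _ ≤ (m : ℝ) ^ n * exp (-1) ^ t := by gcongr
    _ = (m : ℝ) ^ n * exp (-t) := by rw [← exp_nat_mul]; ring_nf

section Counting

variable {ι β : Type*} [Fintype ι] [Fintype β] [DecidableEq β]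

def maxLoad (f : ι → β) : ℕ := univ.sup fun k => #{i | f i = k}

lemma maxLoad_le_card (f : ι → β) : maxLoad f ≤ Fintype.card ι :=
  Finset.sup_le fun _ _ => card_le_univ _

variable [DecidableEq ι]

lemma card_filter_forall_mem_eq (S : Finset ι) (k : β) :
    #{f : ι → β | ∀ i ∈ S, f i = k} = Fintype.card β ^ (Fintype.card ι - #S) := by
  have : ({f : ι → β | ∀ i ∈ S, f i = k} : Finset _) =
      Fintype.piFinset fun i => if i ∈ S then {k} else univ := by
    ext f
    simp only [mem_filter, mem_univ, true_and, Fintype.mem_piFinset]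
    refine forall_congr' fun i => ?_
    split_ifs with hi <;> simp [hi]
  rw [this, Fintype.card_piFinset]
  simp only [apply_ite card, card_singleton, card_univ]
  rw [prod_ite, prod_const_one, one_mul, prod_const, filter_notMem_eq_sdiff,
    ← compl_eq_univ_sdiff, card_compl]

lemma card_filter_le_card_filter_eq_le (t : ℕ) (k : β) :
    #{f : ι → β | t ≤ #{i | f i = k}} ≤
      (Fintype.card ι).choose t * Fintype.card β ^ (Fintype.card ι - t) := by
  have hsub : ({f : ι → β | t ≤ #{i | f i = k}} : Finset _) ⊆
      (powersetCard t univ).biUnion fun S => {f : ι → β | ∀ i ∈ S, f i = k} := by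
    intro f hf
    obtain ⟨S, hSk, hS⟩ := exists_subset_card_eq (mem_filter.1 hf).2
    refine mem_biUnion.2 ⟨S, mem_powersetCard.2 ⟨subset_univ S, hS⟩, ?_⟩
    simpa using fun i hi => (mem_filter.1 (hSk hi)).2
  calc _ ≤ ∑ S ∈ powersetCard t (univ : Finset ι), #{f : ι → β | ∀ i ∈ S, f i = k} :=
        (card_le_card hsub).trans card_biUnion_le
    _ = ∑ S ∈ powersetCard t (univ : Finset ι), Fintype.card β ^ (Fintype.card ι - t) :=
        sum_congr rfl fun S hS => by
          rw [card_filter_forall_mem_eq, (mem_powersetCard.1 hS).2]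
    _ = _ := by rw [sum_const, card_powersetCard, card_univ, smul_eq_mul]

lemma card_filter_le_maxLoad_le {t : ℕ} (ht : 0 < t) :
    #{f : ι → β | t ≤ maxLoad f} ≤
      Fintype.card β * ((Fintype.card ι).choose t * Fintype.card β ^ (Fintype.card ι - t)) := by
  have hsub : ({f : ι → β | t ≤ maxLoad f} : Finset _) ⊆
      univ.biUnion fun k => {f : ι → β | t ≤ #{i | f i = k}} := by
    intro f hf
    obtain ⟨k, -, hk⟩ := (Finset.le_sup_iff ht).1 (mem_filter.1 hf).2
    exact mem_biUnion.2 ⟨k, mem_univ k, mem_filter.2 ⟨mem_univ f, hk⟩⟩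
  calc _ ≤ ∑ k : β, #{f : ι → β | t ≤ #{i | f i = k}} :=
        (card_le_card hsub).trans card_biUnion_le
    _ ≤ ∑ _k : β, (Fintype.card ι).choose t * Fintype.card β ^ (Fintype.card ι - t) :=
        sum_le_sum fun k _ => card_filter_le_card_filter_eq_le t k
    _ = _ := by rw [sum_const, card_univ, smul_eq_mul]

lemma sum_maxLoad_le {t : ℕ} (ht : 0 < t) :
    ∑ f : ι → β, maxLoad f ≤ t * Fintype.card (ι → β) + Fintype.card ι *
      (Fintype.card β * ((Fintype.card ι).choose t * Fintype.card β ^ (Fintype.card ι - t))) :=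
  (sum_le_mul_card_add_mul_card_filter_le univ maxLoad (fun f _ => maxLoad_le_card f) t).trans
    (add_le_add_right (Nat.mul_le_mul_left _ (card_filter_le_maxLoad_le ht)) _)

lemma sum_maxLoad_le_card_mul [Nonempty β] {t : ℕ} (ht : 0 < t)
    (h : exp 2 * Fintype.card ι ≤ t * Fintype.card β) :
    ∑ f : ι → β, (maxLoad f : ℝ) ≤
      Fintype.card (ι → β) * (t + Fintype.card ι * Fintype.card β * exp (-t)) := by
  set n := Fintype.card ι
  set m := Fintype.card β
  have hcard : (Fintype.card (ι → β) : ℝ) = (m : ℝ) ^ n := by simp [n, m]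
  calc ∑ f : ι → β, (maxLoad f : ℝ)
      ≤ t * (m : ℝ) ^ n + n * (m * ((n.choose t : ℝ) * (m : ℝ) ^ (n - t))) := by
        rw [← hcard]; exact_mod_cast sum_maxLoad_le ht
    _ ≤ t * (m : ℝ) ^ n + n * (m * ((m : ℝ) ^ n * exp (-t))) := by
        gcongr _ + _ * (_ * ?_)
        exact choose_mul_pow_sub_le_pow_mul_exp_neg Fintype.card_pos ht h
    _ = _ := by rw [hcard]; ring

end Counting

lemma Real.exp_two_le_eight : exp 2 ≤ 8 := by
  have := exp_one_lt_d9
  rw [show (2 : ℝ) = 1 + 1 by norm_num, exp_add]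
  nlinarith [exp_pos 1]

lemma natCeil_add_mul_sq_mul_exp_neg_le {w x : ℝ} (hw : 1 ≤ w) (hx : log (w + 1) ≤ x) :
    (⌈8 * x⌉₊ : ℝ) + x * w ^ 2 * exp (-⌈8 * x⌉₊) ≤ 11 * x := by
  set t := ⌈8 * x⌉₊
  have hx2 : 1 / 2 ≤ x := by
    have : 1 / 2 < log 2 := by linarith [log_two_gt_d9]
    linarith [log_le_log two_pos (show (2 : ℝ) ≤ w + 1 by linarith)]
  have ht : (t : ℝ) ≤ 10 * x := by linarith [Nat.ceil_lt_add_one (by linarith : 0 ≤ 8 * x)]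
  have hexp : w ^ 2 ≤ exp t := calc
    w ^ 2 ≤ (w + 1) ^ 2 := by gcongr; linarith
    _ = exp (log (w + 1) + log (w + 1)) := by rw [exp_add, exp_log (by linarith), sq]
    _ ≤ exp t := exp_le_exp.2 <| by
        linarith [Nat.le_ceil (8 * x), log_nonneg (by linarith : 1 ≤ w + 1)]
  have htail : x * w ^ 2 * exp (-t) ≤ x := by
    rw [exp_neg, mul_assoc, ← div_eq_mul_inv]
    exact mul_le_of_le_one_right (by linarith) (div_le_one_of_le₀ hexp (exp_pos _).le)
  linarith

/-- expected maximum load of balls in bins: there is a universal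
constant `C > 0` such that if `d ≥ w·log(w+1)` and `X₁, …, X_d` are independent
uniform on `{1,…,w}` with bin counts `N_k = #{i : X_i = k}`, then
`E[max_k N_k] ≤ C·d/w`.  The expectation is written explicitly as the average over
the (finite, uniform) sample space `Fin d → Fin w`. -/
theorem expected_max_load :
    ∃ C : ℝ, 0 < C ∧
      ∀ (d w : ℕ), 0 < d → 0 < w →
      (w : ℝ) * Real.log ((w : ℝ) + 1) ≤ (d : ℝ) →
      ((∑ f : Fin d → Fin w,
          ((Finset.univ.sup fun k : Fin w =>
            (Finset.univ.filter fun i : Fin d => f i = k).card : ℕ) : ℝ))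
        / (Fintype.card (Fin d → Fin w) : ℝ))
      ≤ C * d / w := by
  refine ⟨11, by norm_num, fun d w _ hw hdw => ?_⟩
  have : NeZero w := ⟨hw.ne'⟩
  have hw' : (0 : ℝ) < w := Nat.cast_pos.2 hw
  set t := ⌈8 * (d / w : ℝ)⌉₊
  have hmain := sum_maxLoad_le_card_mul (ι := Fin d) (β := Fin w) (t := t)
    (Nat.ceil_pos.2 (by positivity)) (by
      rw [Fintype.card_fin, Fintype.card_fin, ← div_le_iff₀ hw', mul_div_assoc]
      exact (mul_le_mul_of_nonneg_right exp_two_le_eight (by positivity)).trans (Nat.le_ceil _))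
  have hcard : (0 : ℝ) < Fintype.card (Fin d → Fin w) := by exact_mod_cast Fintype.card_pos
  rw [div_le_iff₀ hcard, mul_comm]
  refine hmain.trans (mul_le_mul_of_nonneg_left ?_ hcard.le)
  simp only [Fintype.card_fin]
  calc (t : ℝ) + d * w * exp (-t) = t + d / w * w ^ 2 * exp (-t) := by field_simp
    _ ≤ 11 * (d / w) := natCeil_add_mul_sq_mul_exp_neg_le (Nat.one_le_cast.2 hw)
        (by rw [le_div_iff₀ hw']; linarith)
    _ = 11 * d / w := by ring
end

section
/- (Lasso oracle inequality, exact sparsity case.) Let S ∈ ℝ^{m×d}, let μ* ∈ ℝ^d have support T ⊆ {1,…,d} with |T| = s ≥ 1, and suppose S satisfies the restricted eigenvalue condition over T with parameter κ > 0: (1/m)·‖S Δ‖₂² ≥ κ·‖Δ‖₂² for every Δ ∈ ℝ^d with ‖Δ_{Tᶜ}‖₁ ≤ 3·‖Δ_T‖₁. Let y = S μ* + w for some w ∈ ℝ^m, and let λ > 0 satisfy λ ≥ (2/m)·‖Sᵀ w‖_∞. Then any minimizer μ̂ of the Lasso objective x ↦ (1/(2m))·‖y − S x‖₂² + λ·‖x‖₁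 over ℝ^d satisfies ‖μ̂ − μ*‖₂ ≤ (3/κ)·√s·λ. -/
/-!
Write `μ̂ = μ* + Δ`. Comparing the Lasso objective at `μ̂` and at `μ*` gives the basic inequality
`(1/2m)‖SΔ‖² ≤ (1/m)⟨Δ, Sᵀw⟩ + λ(‖μ*‖₁ − ‖μ̂‖₁)`. The noise term is at most `(λ/2)‖Δ‖₁` by the
choice of `λ`, and since `μ*` lives on `T`, `‖μ*‖₁ − ‖μ̂‖₁ ≤ ‖Δ_T‖₁ − ‖Δ_{Tᶜ}‖₁`. Together,
`(1/2m)‖SΔ‖² + (λ/2)‖Δ_{Tᶜ}‖₁ ≤ (3λ/2)‖Δ_T‖₁`, so `Δ` lies in the cone of the restricted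
eigenvalue condition, and `κ‖Δ‖₂² ≤ 3λ‖Δ_T‖₁ ≤ 3λ√s‖Δ‖₂` by Cauchy–Schwarz.
-/

open Finset Matrix

section
variable {ι η : Type*} [Fintype ι] [Fintype η]

theorem penalizedLeastSquares_basic_inequality (S : Matrix η ι ℝ) (μ Δ : ι → ℝ) (w : η → ℝ)
    (c : ℝ) (P : (ι → ℝ) → ℝ)
    (hmin : c * ∑ i, ((S *ᵥ μ + w) i - (S *ᵥ (μ + Δ)) i) ^ 2 + P (μ + Δ) ≤
      c * ∑ i, ((S *ᵥ μ + w) i - (S *ᵥ μ) i) ^ 2 + P μ) :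
    c * ∑ i, (S *ᵥ Δ) i ^ 2 ≤ 2 * c * (Δ ⬝ᵥ (Sᵀ *ᵥ w)) + (P μ - P (μ + Δ)) := by
  have hresid : ∀ i, (S *ᵥ μ + w) i - (S *ᵥ (μ + Δ)) i = w i - (S *ᵥ Δ) i := by
    intro i; simp only [mulVec_add, Pi.add_apply]; ring
  have hcross : Δ ⬝ᵥ (Sᵀ *ᵥ w) = ∑ i, w i * (S *ᵥ Δ) i := by
    rw [mulVec_transpose, dotProduct_comm, ← dotProduct_mulVec, dotProduct]
  simp only [hresid] at hmin
  simp only [Pi.add_apply, add_sub_cancel_left, sub_sq, sum_add_distrib, sum_sub_distrib,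
    ← mul_sum, mul_assoc] at hmin
  rw [hcross]
  linarith

theorem dotProduct_le_mul_sum_abs {x c : ι → ℝ} {b : ℝ} (hc : ∀ j, |c j| ≤ b) :
    x ⬝ᵥ c ≤ b * ∑ j, |x j| := by
  rw [dotProduct, mul_sum]
  refine sum_le_sum fun j _ => ?_
  calc x j * c j ≤ |x j| * |c j| := by rw [← abs_mul]; exact le_abs_self _
    _ ≤ b * |x j| := by rw [mul_comm]; exact mul_le_mul_of_nonneg_right (hc j) (abs_nonneg _)

theorem sum_abs_sub_sum_abs_add_le_of_support [DecidableEq ι] {T : Finset ι} {μ : ι → ℝ}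
    (hμ : ∀ j, j ∉ T → μ j = 0) (Δ : ι → ℝ) :
    ∑ j, |μ j| - ∑ j, |μ j + Δ j| ≤ ∑ j ∈ T, |Δ j| - ∑ j ∈ Tᶜ, |Δ j| := by
  have hoff : ∀ j ∈ Tᶜ, |μ j + Δ j| = |Δ j| := fun j hj => by
    rw [hμ j (mem_compl.mp hj), zero_add]
  have hμT : ∑ j ∈ Tᶜ, |μ j| = 0 := sum_eq_zero fun j hj => by simp [hμ j (mem_compl.mp hj)]
  have hon : ∑ j ∈ T, |μ j| - ∑ j ∈ T, |μ j + Δ j| ≤ ∑ j ∈ T, |Δ j| := by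
    rw [← sum_sub_distrib]
    exact sum_le_sum fun j _ => by simpa using abs_sub_abs_le_abs_sub (μ j) (μ j + Δ j)
  rw [← sum_add_sum_compl T (fun j => |μ j|), ← sum_add_sum_compl T (fun j => |μ j + Δ j|),
    sum_congr rfl hoff, hμT]
  linarith

theorem lasso_basic_inequality [DecidableEq ι] (S : Matrix η ι ℝ) (w : η → ℝ)
    {T : Finset ι} {μ : ι → ℝ} (hμ : ∀ j, j ∉ T → μ j = 0) (Δ : ι → ℝ) {c lam : ℝ}
    (hlam : 0 ≤ lam) (hw : ∀ j, |2 * c * (Sᵀ *ᵥ w) j| ≤ lam / 2)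
    (hmin : c * ∑ i, ((S *ᵥ μ + w) i - (S *ᵥ (μ + Δ)) i) ^ 2 + lam * ∑ j, |(μ + Δ) j| ≤
      c * ∑ i, ((S *ᵥ μ + w) i - (S *ᵥ μ) i) ^ 2 + lam * ∑ j, |μ j|) :
    c * ∑ i, (S *ᵥ Δ) i ^ 2 + lam / 2 * ∑ j ∈ Tᶜ, |Δ j| ≤ 3 * lam / 2 * ∑ j ∈ T, |Δ j| := by
  have hbasic := penalizedLeastSquares_basic_inequality S μ Δ w c
    (fun x => lam * ∑ j, |x j|) hmin
  have hnoise : 2 * c * (Δ ⬝ᵥ (Sᵀ *ᵥ w)) ≤ lam / 2 * (∑ j ∈ T, |Δ j| + ∑ j ∈ Tᶜ, |Δ j|) := by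
    rw [sum_add_sum_compl, ← smul_eq_mul, ← dotProduct_smul]
    exact dotProduct_le_mul_sum_abs hw
  have hsupport := mul_le_mul_of_nonneg_left (sum_abs_sub_sum_abs_add_le_of_support hμ Δ) hlam
  simp only [Pi.add_apply] at hbasic
  linarith

theorem sum_abs_le_sqrt_card_mul_sqrt_sum_sq (T : Finset ι) (x : ι → ℝ) :
    ∑ j ∈ T, |x j| ≤ √(#T) * √(∑ j, x j ^ 2) := by
  rw [← Real.sqrt_mul (Nat.cast_nonneg _)]
  refine Real.le_sqrt_of_sq_le ?_
  calc (∑ j ∈ T, |x j|) ^ 2 ≤ #T * ∑ j ∈ T, |x j| ^ 2 :=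
        sq_sum_le_card_mul_sum_sq (s := T) (f := fun j => |x j|)
    _ ≤ #T * ∑ j, x j ^ 2 := by
      simp only [sq_abs]
      gcongr
      exact subset_univ T

end

theorem le_div_of_mul_sq_le_mul {κ c N : ℝ} (hκ : 0 < κ) (hc : 0 ≤ c) (hN : 0 ≤ N)
    (h : κ * N ^ 2 ≤ c * N) : N ≤ c / κ := by
  rw [le_div_iff₀ hκ]
  rcases hN.eq_or_lt with rfl | hN
  · simpa using hc
  · exact le_of_mul_le_mul_right (by linarith) hN

theorem lasso_oracle_inequality_general (m d s : ℕ)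
    (S : Matrix (Fin m) (Fin d) ℝ)
    (μstar : Fin d → ℝ) (T : Finset (Fin d)) (hT : T.card = s)
    (hsupp : ∀ j, j ∉ T → μstar j = 0)
    (κ : ℝ) (hκ : 0 < κ)
    -- restricted eigenvalue condition over `T` with parameter `κ`
    (hRE : ∀ Δ : Fin d → ℝ,
      (∑ j ∈ Tᶜ, |Δ j|) ≤ 3 * ∑ j ∈ T, |Δ j| →
      κ * ∑ j, (Δ j) ^ 2 ≤ (1 / (m : ℝ)) * ∑ i, (S.mulVec Δ i) ^ 2)
    (w : Fin m → ℝ) (y : Fin m → ℝ) (hy : y = S.mulVec μstar + w)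
    (lam : ℝ) (hlam_pos : 0 < lam)
    -- `λ ≥ (2/m)·‖Sᵀ w‖_∞`
    (hlam : ∀ j : Fin d, (2 / (m : ℝ)) * |∑ i, S i j * w i| ≤ lam)
    (μhat : Fin d → ℝ)
    -- `μ̂` minimizes the Lasso objective
    (hmin : ∀ x : Fin d → ℝ,
      (1 / (2 * (m : ℝ))) * (∑ i, (y i - S.mulVec μhat i) ^ 2)
          + lam * ∑ j, |μhat j|
        ≤ (1 / (2 * (m : ℝ))) * (∑ i, (y i - S.mulVec x i) ^ 2)
          + lam * ∑ j, |x j|) :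
    Real.sqrt (∑ j, (μhat j - μstar j) ^ 2) ≤ (3 / κ) * Real.sqrt s * lam := by
  subst hy
  obtain ⟨Δ, rfl⟩ : ∃ Δ, μhat = μstar + Δ := ⟨μhat - μstar, by abel⟩
  simp only [Pi.add_apply, add_sub_cancel_left]
  have hw : ∀ j, |2 * (1 / (2 * (m : ℝ))) * (Sᵀ *ᵥ w) j| ≤ lam / 2 := fun j => by
    rw [abs_mul, abs_of_nonneg (by positivity)]
    calc 2 * (1 / (2 * (m : ℝ))) * |∑ i, S i j * w i| = 2 / m * |∑ i, S i j * w i| / 2 := by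
          ring
      _ ≤ lam / 2 := by linarith [hlam j]
  have hkey := lasso_basic_inequality S w hsupp Δ hlam_pos.le hw (hmin μstar)
  have hfit : 0 ≤ 1 / (2 * (m : ℝ)) * ∑ i, (S *ᵥ Δ) i ^ 2 := by positivity
  have hcone : ∑ j ∈ Tᶜ, |Δ j| ≤ 3 * ∑ j ∈ T, |Δ j| :=
    le_of_mul_le_mul_left (by linarith) hlam_pos
  have hCS := sum_abs_le_sqrt_card_mul_sqrt_sum_sq T Δ
  rw [hT] at hCS
  refine le_div_of_mul_sq_le_mul (c := 3 * lam * √s) hκ (by positivity) (Real.sqrt_nonneg _) ?_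
    |>.trans_eq (by ring)
  rw [Real.sq_sqrt (by positivity)]
  calc κ * ∑ j, Δ j ^ 2 ≤ 1 / m * ∑ i, (S *ᵥ Δ) i ^ 2 := hRE Δ hcone
    _ = 2 * (1 / (2 * (m : ℝ)) * ∑ i, (S *ᵥ Δ) i ^ 2) := by ring
    _ ≤ 3 * lam * ∑ j ∈ T, |Δ j| := by
      linarith [show 0 ≤ lam / 2 * ∑ j ∈ Tᶜ, |Δ j| by positivity]
    _ ≤ 3 * lam * √s * √(∑ j, Δ j ^ 2) := by rw [mul_assoc _ √s]; gcongr

/-- Lasso oracle inequality, exact sparsity case: if `μ*` is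
supported on `T` with `|T| = s ≥ 1`, `S` satisfies the restricted eigenvalue
condition over `T` with parameter `κ > 0`, `y = S μ* + w`, and
`λ ≥ (2/m)·‖Sᵀ w‖_∞`, then any minimizer `μ̂` of the Lasso objective satisfies
`‖μ̂ − μ*‖₂ ≤ (3/κ)·√s·λ`. -/
theorem lasso_oracle_inequality (m d s : ℕ) (hm : 0 < m) (hs : 1 ≤ s)
    (S : Matrix (Fin m) (Fin d) ℝ)
    (μstar : Fin d → ℝ) (T : Finset (Fin d)) (hT : T.card = s)
    (hsupp : ∀ j, j ∉ T → μstar j = 0)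
    (κ : ℝ) (hκ : 0 < κ)
    -- restricted eigenvalue condition over `T` with parameter `κ`
    (hRE : ∀ Δ : Fin d → ℝ,
      (∑ j ∈ Tᶜ, |Δ j|) ≤ 3 * ∑ j ∈ T, |Δ j| →
      κ * ∑ j, (Δ j) ^ 2 ≤ (1 / (m : ℝ)) * ∑ i, (S.mulVec Δ i) ^ 2)
    (w : Fin m → ℝ) (y : Fin m → ℝ) (hy : y = S.mulVec μstar + w)
    (lam : ℝ) (hlam_pos : 0 < lam)
    -- `λ ≥ (2/m)·‖Sᵀ w‖_∞`
    (hlam : ∀ j : Fin d, (2 / (m : ℝ)) * |∑ i, S i j * w i| ≤ lam)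
    (μhat : Fin d → ℝ)
    -- `μ̂` minimizes the Lasso objective
    (hmin : ∀ x : Fin d → ℝ,
      (1 / (2 * (m : ℝ))) * (∑ i, (y i - S.mulVec μhat i) ^ 2)
          + lam * ∑ j, |μhat j|
        ≤ (1 / (2 * (m : ℝ))) * (∑ i, (y i - S.mulVec x i) ^ 2)
          + lam * ∑ j, |x j|) :
    Real.sqrt (∑ j, (μhat j - μstar j) ^ 2) ≤ (3 / κ) * Real.sqrt s * lam :=
  lasso_oracle_inequality_general m d s S μstar T hT hsupp κ hκ hRE w y hy lam hlam_pos hlam μhat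
    hmin
end
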